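/- arXiv:2111.03999 — 2 statements merged into one kernel-verified Lean document; each statement's English description precedes it below -/
import Mathlib

section
/- Let h be a smooth positive function on a neighborhood of 0 in ℂ (a conformal metric factor h(z, z̄)dz dz̄). If f is a holomorphic function on a neighborhood of 0 with f(0)=0 and f'(0)≠0, and h̃(z, z̄) = h(f(z), f(z)‾) |f'(z)|² is the pulled-back metric factor, then at every point z near 0 one has (∂_z log h̃)(∂_z ∂_z̄ log h̃) − ∂_z ∂_z̄ ∂_z log h̃ = f'(z)‾ · (f'(z))² · [ (∂_η log h)(∂_η ∂_η̄ log h) − ∂_η ∂_η̄ ∂_η log h ] evaluated at η = f(z). -/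
open Complex ComplexConjugate

/-- Wirtinger derivative `∂_z = ½(∂_x − i∂_y)`. -/
noncomputable def wdz (f : ℂ → ℂ) (z : ℂ) : ℂ :=
  (1/2) * (fderiv ℝ f z 1 - Complex.I * fderiv ℝ f z Complex.I)

/-- Wirtinger derivative `∂_z̄ = ½(∂_x + i∂_y)`. -/
noncomputable def wdzbar (f : ℂ → ℂ) (z : ℂ) : ℂ :=
  (1/2) * (fderiv ℝ f z 1 + Complex.I * fderiv ℝ f z Complex.I)

/-- The "intrinsic vanishing" expression `(∂_z log h)(∂_z∂_z̄ log h) − ∂_z∂_z̄∂_z log h`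
for a conformal metric factor `h`, written in terms of `L = log h`. -/
noncomputable def ivExpr (L : ℂ → ℂ) (z : ℂ) : ℂ :=
  wdz L z * wdzbar (wdz L) z - wdz (wdzbar (wdz L)) z

section lemmas
variable {f g : ℂ → ℂ} {z : ℂ}

lemma wdz_congr (hfg : f =ᶠ[nhds z] g) : wdz f z = wdz g z := by
  unfold wdz; rw [hfg.fderiv_eq]

lemma wdzbar_congr (hfg : f =ᶠ[nhds z] g) : wdzbar f z = wdzbar g z := by
  unfold wdzbar; rw [hfg.fderiv_eq]

lemma fderiv_real_of_holo (hf : DifferentiableAt ℂ f z) (v : ℂ) :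
    fderiv ℝ f z v = deriv f z * v := by
  rw [(hf.hasFDerivAt.restrictScalars ℝ).fderiv]
  simp only [ContinuousLinearMap.coe_restrictScalars']
  have : v = v • (1 : ℂ) := by simp
  rw [this, (fderiv ℂ f z).map_smul]
  simp [← toSpanSingleton_deriv, hf.hasDerivAt.deriv, mul_comm]

lemma wdz_holo (hf : DifferentiableAt ℂ f z) : wdz f z = deriv f z := by
  simp only [wdz, fderiv_real_of_holo hf]
  have := Complex.I_mul_I
  ring_nf
  rw [Complex.I_sq]
  ring

lemma wdzbar_holo (hf : DifferentiableAt ℂ f z) : wdzbar f z = 0 := by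
  simp only [wdzbar, fderiv_real_of_holo hf]
  ring_nf
  rw [Complex.I_sq]
  ring

lemma diffAt_conj (hf : DifferentiableAt ℝ f z) :
    DifferentiableAt ℝ (fun w => conj (f w)) z :=
  Complex.conjCLE.differentiableAt.comp z hf

lemma fderiv_conj (hf : DifferentiableAt ℝ f z) (v : ℂ) :
    fderiv ℝ (fun w => conj (f w)) z v = conj (fderiv ℝ f z v) := by
  have : (fun w => conj (f w)) = (Complex.conjCLE : ℂ → ℂ) ∘ f := rfl
  rw [this, fderiv_comp z Complex.conjCLE.differentiableAt hf]
  rw [Complex.conjCLE.fderiv]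
  rfl

lemma wdz_conj_holo (hf : DifferentiableAt ℂ f z) :
    wdz (fun w => conj (f w)) z = 0 := by
  simp only [wdz, fderiv_conj (hf.restrictScalars ℝ), fderiv_real_of_holo hf]
  simp only [map_mul, map_one, Complex.conj_I]
  ring_nf
  rw [Complex.I_sq]
  ring

lemma wdzbar_conj_holo (hf : DifferentiableAt ℂ f z) :
    wdzbar (fun w => conj (f w)) z = conj (deriv f z) := by
  simp only [wdzbar, fderiv_conj (hf.restrictScalars ℝ), fderiv_real_of_holo hf]
  simp only [map_mul, map_one, Complex.conj_I]
  ring_nf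
  rw [Complex.I_sq]
  ring

end lemmas

section rules
variable {f g : ℂ → ℂ} {z : ℂ}

lemma wdz_add (hf : DifferentiableAt ℝ f z) (hg : DifferentiableAt ℝ g z) :
    wdz (fun w => f w + g w) z = wdz f z + wdz g z := by
  simp only [wdz, fderiv_fun_add hf hg, ContinuousLinearMap.add_apply]
  ring

lemma wdzbar_add (hf : DifferentiableAt ℝ f z) (hg : DifferentiableAt ℝ g z) :
    wdzbar (fun w => f w + g w) z = wdzbar f z + wdzbar g z := by
  simp only [wdzbar, fderiv_fun_add hf hg, ContinuousLinearMap.add_apply]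
  ring

lemma wdz_mul (hf : DifferentiableAt ℝ f z) (hg : DifferentiableAt ℝ g z) :
    wdz (fun w => f w * g w) z = wdz f z * g z + f z * wdz g z := by
  simp only [wdz, fderiv_fun_mul hf hg, ContinuousLinearMap.add_apply,
    ContinuousLinearMap.smul_apply, smul_eq_mul]
  ring

lemma wdzbar_mul (hf : DifferentiableAt ℝ f z) (hg : DifferentiableAt ℝ g z) :
    wdzbar (fun w => f w * g w) z = wdzbar f z * g z + f z * wdzbar g z := by
  simp only [wdzbar, fderiv_fun_mul hf hg, ContinuousLinearMap.add_apply,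
    ContinuousLinearMap.smul_apply, smul_eq_mul]
  ring

lemma wdz_comp (hg : DifferentiableAt ℝ g (f z)) (hf : DifferentiableAt ℂ f z) :
    wdz (fun w => g (f w)) z = deriv f z * wdz g (f z) := by
  have hfc : fderiv ℝ (fun w => g (f w)) z
      = (fderiv ℝ g (f z)).comp (fderiv ℝ f z) :=
    fderiv_comp z hg (hf.restrictScalars ℝ)
  set D := fderiv ℝ g (f z) with hD
  set a := deriv f z with ha
  have key : ∀ v : ℂ, fderiv ℝ (fun w => g (f w)) z v = D (a * v) := by
    intro v
    rw [hfc]; simp [fderiv_real_of_holo hf]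
    rfl
  have expand : ∀ b : ℂ, D b = b.re • D 1 + b.im • D I := by
    intro b
    conv_lhs => rw [← Complex.re_add_im b]
    rw [show (↑b.re + ↑b.im * I : ℂ) = b.re • (1:ℂ) + b.im • I by
      simp [Complex.real_smul]]
    rw [map_add, map_smul, map_smul]
  simp only [wdz, key, mul_one]
  rw [expand a, expand (a*I)]
  have h1 : (a * I).re = -a.im := by simp
  have h2 : (a * I).im = a.re := by simp
  rw [h1, h2]
  simp only [neg_smul, Complex.real_smul]
  have hre : a = (↑a.re + ↑a.im * I : ℂ) := (Complex.re_add_im a).symm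
  conv_rhs => rw [hre]
  ring_nf
  rw [Complex.I_sq]
  ring

lemma wdzbar_comp (hg : DifferentiableAt ℝ g (f z)) (hf : DifferentiableAt ℂ f z) :
    wdzbar (fun w => g (f w)) z = conj (deriv f z) * wdzbar g (f z) := by
  have hfc : fderiv ℝ (fun w => g (f w)) z
      = (fderiv ℝ g (f z)).comp (fderiv ℝ f z) :=
    fderiv_comp z hg (hf.restrictScalars ℝ)
  set D := fderiv ℝ g (f z) with hD
  set a := deriv f z with ha
  have key : ∀ v : ℂ, fderiv ℝ (fun w => g (f w)) z v = D (a * v) := by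
    intro v
    rw [hfc]; simp [fderiv_real_of_holo hf]
    rfl
  have expand : ∀ b : ℂ, D b = b.re • D 1 + b.im • D I := by
    intro b
    conv_lhs => rw [← Complex.re_add_im b]
    rw [show (↑b.re + ↑b.im * I : ℂ) = b.re • (1:ℂ) + b.im • I by
      simp [Complex.real_smul]]
    rw [map_add, map_smul, map_smul]
  simp only [wdzbar, key, mul_one]
  rw [expand a, expand (a*I)]
  have h1 : (a * I).re = -a.im := by simp
  have h2 : (a * I).im = a.re := by simp
  rw [h1, h2]
  simp only [neg_smul, Complex.real_smul]
  have hconj : conj a = (↑a.re - ↑a.im * I : ℂ) := by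
    nth_rewrite 1 [← Complex.re_add_im a]
    simp only [map_add, map_mul, Complex.conj_I, Complex.conj_ofReal]
    ring
  rw [hconj]
  ring_nf
  rw [Complex.I_sq]
  ring

end rules

section smooth
open scoped ContDiff
variable {L : ℂ → ℂ} {s : Set ℂ}

lemma contDiffOn_wdz (hL : ContDiffOn ℝ ∞ L s) (hs : IsOpen s) :
    ContDiffOn ℝ ∞ (wdz L) s := by
  have hfd : ContDiffOn ℝ ∞ (fun x => fderiv ℝ L x) s :=
    hL.fderiv_of_isOpen hs (le_of_eq rfl)
  exact contDiffOn_const.mul ((hfd.clm_apply contDiffOn_const).sub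
    (contDiffOn_const.mul (hfd.clm_apply contDiffOn_const)))

lemma contDiffOn_wdzbar (hL : ContDiffOn ℝ ∞ L s) (hs : IsOpen s) :
    ContDiffOn ℝ ∞ (wdzbar L) s := by
  have hfd : ContDiffOn ℝ ∞ (fun x => fderiv ℝ L x) s :=
    hL.fderiv_of_isOpen hs (le_of_eq rfl)
  exact contDiffOn_const.mul ((hfd.clm_apply contDiffOn_const).add
    (contDiffOn_const.mul (hfd.clm_apply contDiffOn_const)))

end smooth

section logabs
variable {φ : ℂ → ℂ} {z : ℂ}

lemma hasFDerivAt_log_abs_sq (hφ : DifferentiableAt ℂ φ z) (h0 : φ z ≠ 0) :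
    HasFDerivAt (fun w => ((Real.log (‖φ w‖^2) : ℝ) : ℂ))
      (Complex.ofRealCLM.comp ((Complex.normSq (φ z))⁻¹ •
        ((φ z).re • (Complex.reCLM.comp (fderiv ℝ φ z))
          + (φ z).re • (Complex.reCLM.comp (fderiv ℝ φ z))
          + ((φ z).im • (Complex.imCLM.comp (fderiv ℝ φ z))
            + (φ z).im • (Complex.imCLM.comp (fderiv ℝ φ z)))))) z := by
  have hA : HasFDerivAt φ (fderiv ℝ φ z) z := (hφ.restrictScalars ℝ).hasFDerivAt
  have hRe : HasFDerivAt (fun w => (φ w).re) (Complex.reCLM.comp (fderiv ℝ φ z)) z :=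
    (Complex.reCLM.hasFDerivAt).comp z hA
  have hIm : HasFDerivAt (fun w => (φ w).im) (Complex.imCLM.comp (fderiv ℝ φ z)) z :=
    (Complex.imCLM.hasFDerivAt).comp z hA
  have hN : HasFDerivAt (fun w => (φ w).re * (φ w).re + (φ w).im * (φ w).im)
      ((φ z).re • (Complex.reCLM.comp (fderiv ℝ φ z))
        + (φ z).re • (Complex.reCLM.comp (fderiv ℝ φ z))
        + ((φ z).im • (Complex.imCLM.comp (fderiv ℝ φ z))
          + (φ z).im • (Complex.imCLM.comp (fderiv ℝ φ z)))) z :=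
    (hRe.mul hRe).add (hIm.mul hIm)
  have hN0 : (φ z).re * (φ z).re + (φ z).im * (φ z).im ≠ 0 := by
    rw [← Complex.normSq_apply]
    exact ne_of_gt (Complex.normSq_pos.mpr h0)
  have hlog := (Real.hasDerivAt_log hN0).comp_hasFDerivAt z hN
  have hfinal := (Complex.ofRealCLM.hasFDerivAt).comp z hlog
  have heq : (fun w => ((Real.log (‖φ w‖^2) : ℝ) : ℂ))
      = fun w => ((Real.log ((φ w).re * (φ w).re + (φ w).im * (φ w).im) : ℝ) : ℂ) := by
    funext w
    rw [Complex.sq_norm, Complex.normSq_apply]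
  rw [heq]
  rw [Complex.normSq_apply]
  exact hfinal

lemma diffAt_log_abs_sq (hφ : DifferentiableAt ℂ φ z) (h0 : φ z ≠ 0) :
    DifferentiableAt ℝ (fun w => ((Real.log (‖φ w‖^2) : ℝ) : ℂ)) z :=
  (hasFDerivAt_log_abs_sq hφ h0).differentiableAt

lemma wdz_log_abs_sq (hφ : DifferentiableAt ℂ φ z) (h0 : φ z ≠ 0) :
    wdz (fun w => ((Real.log (‖φ w‖^2) : ℝ) : ℂ)) z
      = deriv φ z / φ z := by
  have hfd := (hasFDerivAt_log_abs_sq hφ h0).fderiv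
  simp only [wdz, hfd]
  set a := deriv φ z with ha
  simp only [ContinuousLinearMap.comp_apply, ContinuousLinearMap.smul_apply,
    ContinuousLinearMap.add_apply, fderiv_real_of_holo hφ, mul_one,
    Complex.ofRealCLM_apply, Complex.reCLM_apply, Complex.imCLM_apply,
    smul_eq_mul]
  simp only [← ha]
  have h1 : (a * I).re = -a.im := by simp
  have h2 : (a * I).im = a.re := by simp
  rw [h1, h2]
  have hNz : Complex.normSq (φ z) = (φ z).re * (φ z).re + (φ z).im * (φ z).im :=
    Complex.normSq_apply _
  have hN0 : ((φ z).re * (φ z).re + (φ z).im * (φ z).im : ℝ) ≠ 0 := by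
    rw [← Complex.normSq_apply]; exact ne_of_gt (Complex.normSq_pos.mpr h0)
  rw [hNz, eq_div_iff h0]
  set p := (φ z).re with hp
  set q := (φ z).im with hq
  set x := a.re with hx
  set y := a.im with hy
  have hφz : φ z = (↑p + ↑q * I : ℂ) := (Complex.re_add_im _).symm
  have haz : a = (↑x + ↑y * I : ℂ) := (Complex.re_add_im _).symm
  rw [hφz, haz]
  push_cast
  have hc' : ((p:ℂ)*p + q*q) ≠ 0 := by exact_mod_cast hN0
  have hc'' : ((p:ℂ)^2 + q^2) ≠ 0 := by rw [sq, sq]; exact hc'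
  field_simp
  ring_nf
  rw [Complex.I_sq]
  ring

lemma wdzbar_log_abs_sq (hφ : DifferentiableAt ℂ φ z) (h0 : φ z ≠ 0) :
    wdzbar (fun w => ((Real.log (‖φ w‖^2) : ℝ) : ℂ)) z
      = conj (deriv φ z) / conj (φ z) := by
  have hfd := (hasFDerivAt_log_abs_sq hφ h0).fderiv
  simp only [wdzbar, hfd]
  set a := deriv φ z with ha
  simp only [ContinuousLinearMap.comp_apply, ContinuousLinearMap.smul_apply,
    ContinuousLinearMap.add_apply, fderiv_real_of_holo hφ, mul_one,
    Complex.ofRealCLM_apply, Complex.reCLM_apply, Complex.imCLM_apply,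
    smul_eq_mul]
  simp only [← ha]
  have h1 : (a * I).re = -a.im := by simp
  have h2 : (a * I).im = a.re := by simp
  rw [h1, h2]
  have hNz : Complex.normSq (φ z) = (φ z).re * (φ z).re + (φ z).im * (φ z).im :=
    Complex.normSq_apply _
  have hN0 : ((φ z).re * (φ z).re + (φ z).im * (φ z).im : ℝ) ≠ 0 := by
    rw [← Complex.normSq_apply]; exact ne_of_gt (Complex.normSq_pos.mpr h0)
  have h0' : conj (φ z) ≠ 0 := by
    simpa using h0
  rw [hNz, eq_div_iff h0']
  set p := (φ z).re with hp
  set q := (φ z).im with hq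
  set x := a.re with hx
  set y := a.im with hy
  have hφz : conj (φ z) = (↑p - ↑q * I : ℂ) := by
    nth_rewrite 1 [← Complex.re_add_im (φ z)]
    simp only [map_add, map_mul, Complex.conj_I, Complex.conj_ofReal]
    ring
  have haz : conj a = (↑x - ↑y * I : ℂ) := by
    nth_rewrite 1 [← Complex.re_add_im a]
    simp only [map_add, map_mul, Complex.conj_I, Complex.conj_ofReal]
    ring
  rw [hφz, haz]
  push_cast
  have hc' : ((p:ℂ)*p + q*q) ≠ 0 := by exact_mod_cast hN0
  have hc'' : ((p:ℂ)^2 + q^2) ≠ 0 := by rw [sq, sq]; exact hc'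
  field_simp
  ring_nf
  rw [Complex.I_sq]
  ring

end logabs


open scoped ContDiff

/-- Transformation law of the intrinsic-vanishing expression under a holomorphic
change of coordinates `η = f(z)` applied to the metric `h(η,η̄)dηdη̄`. -/
theorem stmt0 (h : ℂ → ℝ) (f : ℂ → ℂ) (r : ℝ) (hr : 0 < r)
    (hsm : ContDiffOn ℝ (⊤ : ℕ∞) h (Metric.ball (0:ℂ) r))
    (hpos : ∀ z ∈ Metric.ball (0:ℂ) r, 0 < h z)
    (hf : ∀ z ∈ Metric.ball (0:ℂ) r, DifferentiableAt ℂ f z)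
    (hf0 : f 0 = 0) (hf'0 : deriv f 0 ≠ 0) :
    ∃ ε > 0, ∀ z ∈ Metric.ball (0:ℂ) ε,
      ivExpr (fun w => (Real.log (h (f w) * ‖deriv f w‖^2) : ℂ)) z
        = conj (deriv f z) * (deriv f z)^2
            * ivExpr (fun η => (Real.log (h η) : ℂ)) (f z) := by
  set B := Metric.ball (0:ℂ) r with hBdef
  have hBopen : IsOpen B := Metric.isOpen_ball
  have hfd : DifferentiableOn ℂ f B := fun w hw => (hf w hw).differentiableWithinAt
  have hAn : AnalyticOnNhd ℂ f B := hfd.analyticOnNhd hBopen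
  have hAn' : AnalyticOnNhd ℂ (deriv f) B := hAn.deriv
  have hAn'' : AnalyticOnNhd ℂ (deriv (deriv f)) B := hAn'.deriv
  set L : ℂ → ℂ := fun η => ((Real.log (h η) : ℝ) : ℂ) with hLdef
  have hLsm : ContDiffOn ℝ ∞ L B := by
    have hlog : ContDiffOn ℝ ∞ (fun η => Real.log (h η)) B :=
      (hsm.of_le (by simp)).log (fun x hx => ne_of_gt (hpos x hx))
    exact Complex.ofRealCLM.contDiff.comp_contDiffOn hlog
  set G := wdz L with hGdef
  set H := wdzbar G with hHdef
  set K := wdz H with hKdef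
  have hGsm : ContDiffOn ℝ ∞ G B := contDiffOn_wdz hLsm hBopen
  have hHsm : ContDiffOn ℝ ∞ H B := contDiffOn_wdzbar hGsm hBopen
  have hLd : ∀ x ∈ B, DifferentiableAt ℝ L x := fun x hx =>
    (hLsm.contDiffAt (hBopen.mem_nhds hx)).differentiableAt (by norm_num)
  have hGd : ∀ x ∈ B, DifferentiableAt ℝ G x := fun x hx =>
    (hGsm.contDiffAt (hBopen.mem_nhds hx)).differentiableAt (by norm_num)
  have hHd : ∀ x ∈ B, DifferentiableAt ℝ H x := fun x hx =>
    (hHsm.contDiffAt (hBopen.mem_nhds hx)).differentiableAt (by norm_num)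
  have h0B : (0:ℂ) ∈ B := Metric.mem_ball_self hr
  have hnhds : {w : ℂ | f w ∈ B ∧ deriv f w ≠ 0} ∩ B ∈ nhds (0:ℂ) := by
    have h1 : {w : ℂ | f w ∈ B} ∈ nhds (0:ℂ) :=
      (hf 0 h0B).continuousAt (hBopen.mem_nhds (by rw [hf0]; exact h0B))
    have h2 : {w : ℂ | deriv f w ≠ 0} ∈ nhds (0:ℂ) :=
      (hAn' 0 h0B).continuousAt (isOpen_compl_singleton.mem_nhds hf'0)
    exact Filter.inter_mem (Filter.inter_mem h1 h2) (hBopen.mem_nhds h0B)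
  obtain ⟨ε, hε, hsub⟩ := Metric.mem_nhds_iff.mp hnhds
  refine ⟨ε, hε, ?_⟩
  -- facts on the small ball
  have hP : ∀ w ∈ Metric.ball (0:ℂ) ε, w ∈ B ∧ f w ∈ B ∧ deriv f w ≠ 0 := by
    intro w hw
    obtain ⟨⟨hw1, hw2⟩, hw3⟩ := hsub hw
    exact ⟨hw3, hw1, hw2⟩
  set Lt : ℂ → ℂ := fun w => ((Real.log (h (f w) * ‖deriv f w‖^2) : ℝ) : ℂ)
    with hLtdef
  set M : ℂ → ℂ := fun w => ((Real.log (‖deriv f w‖^2) : ℝ) : ℂ) with hMdef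
  have eq0 : ∀ w ∈ Metric.ball (0:ℂ) ε, Lt w = L (f w) + M w := by
    intro w hw
    obtain ⟨hwB, hfwB, hφ0⟩ := hP w hw
    have hh : h (f w) ≠ 0 := ne_of_gt (hpos _ hfwB)
    have habs : ‖deriv f w‖^2 ≠ 0 :=
      pow_ne_zero _ (norm_ne_zero_iff.mpr hφ0)
    simp only [Lt, L, M, Real.log_mul hh habs, Complex.ofReal_add]
  have eq1 : ∀ w ∈ Metric.ball (0:ℂ) ε,
      wdz Lt w = deriv f w * G (f w) + deriv (deriv f) w / deriv f w := by
    intro w hw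
    obtain ⟨hwB, hfwB, hφ0⟩ := hP w hw
    have hev : Lt =ᶠ[nhds w] fun u => L (f u) + M u :=
      Filter.eventually_of_mem (Metric.isOpen_ball.mem_nhds hw) eq0
    have hfw : DifferentiableAt ℂ f w := hf w hwB
    have hφw : DifferentiableAt ℂ (deriv f) w := (hAn' w hwB).differentiableAt
    have hd1 : DifferentiableAt ℝ (fun u => L (f u)) w :=
      (hLd _ hfwB).comp w (hfw.restrictScalars ℝ)
    have hd2 : DifferentiableAt ℝ M w := diffAt_log_abs_sq hφw hφ0
    rw [wdz_congr hev, wdz_add hd1 hd2, wdz_comp (hLd _ hfwB) hfw,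
      hMdef, wdz_log_abs_sq hφw hφ0]
  have eq2 : ∀ w ∈ Metric.ball (0:ℂ) ε,
      wdzbar (wdz Lt) w = deriv f w * conj (deriv f w) * H (f w) := by
    intro w hw
    obtain ⟨hwB, hfwB, hφ0⟩ := hP w hw
    have hev : wdz Lt =ᶠ[nhds w]
        fun u => deriv f u * G (f u) + deriv (deriv f) u / deriv f u :=
      Filter.eventually_of_mem (Metric.isOpen_ball.mem_nhds hw) eq1
    have hfw : DifferentiableAt ℂ f w := hf w hwB
    have hφw : DifferentiableAt ℂ (deriv f) w := (hAn' w hwB).differentiableAt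
    have hφ'w : DifferentiableAt ℂ (deriv (deriv f)) w := (hAn'' w hwB).differentiableAt
    have hGfd : DifferentiableAt ℝ (fun u => G (f u)) w :=
      (hGd _ hfwB).comp w (hfw.restrictScalars ℝ)
    have hd1 : DifferentiableAt ℝ (fun u => deriv f u * G (f u)) w :=
      (hφw.restrictScalars ℝ).mul hGfd
    have hdivC : DifferentiableAt ℂ (fun u => deriv (deriv f) u / deriv f u) w :=
      hφ'w.div hφw hφ0
    rw [wdzbar_congr hev, wdzbar_add hd1 (hdivC.restrictScalars ℝ),
      wdzbar_holo hdivC, wdzbar_mul (hφw.restrictScalars ℝ) hGfd,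
      wdzbar_holo hφw, wdzbar_comp (hGd _ hfwB) hfw]
    ring_nf
    rfl
  intro z hz
  obtain ⟨hzB, hfzB, hφ0⟩ := hP z hz
  have hfz : DifferentiableAt ℂ f z := hf z hzB
  have hφz : DifferentiableAt ℂ (deriv f) z := (hAn' z hzB).differentiableAt
  have eq3 : wdz (wdzbar (wdz Lt)) z
      = deriv (deriv f) z * conj (deriv f z) * H (f z)
        + deriv f z * conj (deriv f z) * (deriv f z * K (f z)) := by
    have hev : wdzbar (wdz Lt) =ᶠ[nhds z]
        fun u => deriv f u * conj (deriv f u) * H (f u) :=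
      Filter.eventually_of_mem (Metric.isOpen_ball.mem_nhds hz) eq2
    have hconjd : DifferentiableAt ℝ (fun u => conj (deriv f u)) z :=
      diffAt_conj (hφz.restrictScalars ℝ)
    have hHfd : DifferentiableAt ℝ (fun u => H (f u)) z :=
      (hHd _ hfzB).comp z (hfz.restrictScalars ℝ)
    have hd1 : DifferentiableAt ℝ (fun u => deriv f u * conj (deriv f u)) z :=
      (hφz.restrictScalars ℝ).mul hconjd
    rw [wdz_congr hev]
    have hsplit : wdz (fun u => deriv f u * conj (deriv f u) * H (f u)) z
        = wdz (fun u => deriv f u * conj (deriv f u)) z * H (f z)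
          + deriv f z * conj (deriv f z) * wdz (fun u => H (f u)) z :=
      wdz_mul hd1 hHfd
    rw [hsplit, wdz_mul (hφz.restrictScalars ℝ) hconjd, wdz_holo hφz,
      wdz_conj_holo hφz, wdz_comp (hHd _ hfzB) hfz]
    ring
  have e1 := eq1 z hz
  have e2 := eq2 z hz
  simp only [ivExpr]
  rw [e1, e2, eq3]
  have hGf : wdzbar (wdz L) (f z) = H (f z) := rfl
  have hKf : wdz (wdzbar (wdz L)) (f z) = K (f z) := rfl
  rw [hGf, hKf]
  field_simp
  ring
end

section
/- Let h(z,z̄) = e^{λ(z,z̄)} with λ(z,z̄) = c₁(z+z̄) + c₂(z²+z̄²) + c₃(z³+z̄³) + c₄|z|⁴, where c₁,c₂,c₃,c₄ are real constants satisfying c₁ + 2c₂ + 3c₃ + 2c₄ = 1. Then both z=0 and z=1 are intrinsic vanishing points, i.e. (∂_z log h)(∂_z∂_z̄ log h) − ∂_z∂_z̄∂_z log h vanishes at z=0 and at z=1. Moreover, the sectional curvature quantity ∂_z∂_z̄ log h vanishes at z=0, and is nonzero at z=1 if c₄ ≠ 0. -/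
/-!
Written in the variables `z` and `z̄`, `λ` is a polynomial, and the Wirtinger derivatives of a
polynomial in `z, z̄` are its formal partial derivatives. Hence `∂_z λ = c₁ + 2c₂z + 3c₃z² + 2c₄z z̄²`,
`∂_z̄∂_z λ = 4c₄|z|²` and `∂_z∂_z̄∂_z λ = 4c₄z̄`. At `z = 0` everything but `∂_z λ` vanishes; at
`z = 1` the normalisation gives `∂_z λ(1) = 1`, so the expression is `4c₄ - 4c₄ = 0`, while
`∂_z∂_z̄ λ(1) = 4c₄`.
-/

open Complex ComplexConjugate

open MvPolynomial

@[simp]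
lemma Derivation.map_ofNat {R A M : Type*} [CommSemiring R] [CommSemiring A] [AddCommMonoid M]
    [Algebra R A] [Module A M] [Module R M] (D : Derivation R A M) (n : ℕ) [n.AtLeastTwo] :
    D (no_index (OfNat.ofNat n : A)) = 0 :=
  D.map_natCast n

/-- Every `ℝ`-linear map `ℂ → ℂ` has this form, `a` and `b` being its `∂_z` and `∂_z̄` parts. -/
noncomputable def zConjCLM (a b : ℂ) : ℂ →L[ℝ] ℂ :=
  a • ContinuousLinearMap.id ℝ ℂ + b • (conjCLE : ℂ →L[ℝ] ℂ)

@[simp]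
lemma zConjCLM_apply (a b v : ℂ) : zConjCLM a b v = a * v + b * conj v := rfl

lemma wdz_eq_of_hasFDerivAt {f : ℂ → ℂ} {a b z : ℂ} (hf : HasFDerivAt f (zConjCLM a b) z) :
    wdz f z = a := by
  rw [wdz, hf.fderiv]
  simp only [zConjCLM_apply, conj_I, map_one]
  ring_nf
  simp only [I_sq]
  ring

lemma wdzbar_eq_of_hasFDerivAt {f : ℂ → ℂ} {a b z : ℂ} (hf : HasFDerivAt f (zConjCLM a b) z) :
    wdzbar f z = b := by
  rw [wdzbar, hf.fderiv]
  simp only [zConjCLM_apply, conj_I, map_one]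
  ring_nf
  simp only [I_sq]
  ring

/-- Evaluation of a polynomial in `X 0 = z` and `X 1 = z̄`. -/
noncomputable def evalZConj : MvPolynomial (Fin 2) ℂ →+* ℂ → ℂ :=
  RingHom.pi fun z => eval ![z, conj z]

@[simp]
lemma evalZConj_apply (P : MvPolynomial (Fin 2) ℂ) (z : ℂ) : evalZConj P z = eval ![z, conj z] P :=
  rfl

lemma evalZConj_C (a : ℂ) : evalZConj (C a) = fun _ => a :=
  funext fun _ => eval_C a

lemma evalZConj_X (i : Fin 2) : evalZConj (X i) = fun z => ![z, conj z] i :=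
  funext fun _ => MvPolynomial.eval_X _

lemma hasFDerivAt_evalZConj (P : MvPolynomial (Fin 2) ℂ) (z : ℂ) :
    HasFDerivAt (evalZConj P) (zConjCLM (evalZConj (pderiv 0 P) z) (evalZConj (pderiv 1 P) z)) z := by
  induction P using MvPolynomial.induction_on with
  | C a =>
    rw [evalZConj_C]
    refine (hasFDerivAt_const a z).congr_fderiv (ContinuousLinearMap.ext fun v => ?_)
    simp [evalZConj]
  | add p q hp hq =>
    rw [map_add]
    refine (hp.add hq).congr_fderiv (ContinuousLinearMap.ext fun v => ?_)
    simp only [map_add, add_apply, evalZConj_apply, zConjCLM_apply]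
    ring
  | mul_X p n hp =>
    have hX : HasFDerivAt (evalZConj (X n))
        (zConjCLM (evalZConj (pderiv 0 (X n)) z) (evalZConj (pderiv 1 (X n)) z)) z := by
      rw [evalZConj_X]
      fin_cases n
      · refine (hasFDerivAt_id z).congr_fderiv (ContinuousLinearMap.ext fun v => ?_)
        simp [evalZConj, pderiv_X]
      · refine conjCLE.toContinuousLinearMap.hasFDerivAt.congr_fderiv
          (ContinuousLinearMap.ext fun v => ?_)
        simp [evalZConj, pderiv_X]
    rw [map_mul]
    refine (hp.mul hX).congr_fderiv (ContinuousLinearMap.ext fun v => ?_)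
    simp only [map_mul, Derivation.leibniz, map_add, add_apply, smul_apply, smul_eq_mul,
      evalZConj_apply, zConjCLM_apply]
    ring

lemma wdz_evalZConj (P : MvPolynomial (Fin 2) ℂ) : wdz (evalZConj P) = evalZConj (pderiv 0 P) :=
  funext fun z => wdz_eq_of_hasFDerivAt (hasFDerivAt_evalZConj P z)

lemma wdzbar_evalZConj (P : MvPolynomial (Fin 2) ℂ) :
    wdzbar (evalZConj P) = evalZConj (pderiv 1 P) :=
  funext fun z => wdzbar_eq_of_hasFDerivAt (hasFDerivAt_evalZConj P z)

/-- For `h = e^λ` with `λ = c₁(z+z̄)+c₂(z²+z̄²)+c₃(z³+z̄³)+c₄|z|⁴` and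
`c₁+2c₂+3c₃+2c₄ = 1`, both `z=0` and `z=1` are intrinsic vanishing points;
moreover `∂_z∂_z̄ log h` vanishes at `0` and (if `c₄ ≠ 0`) is nonzero at `1`. -/
theorem stmt4 (c₁ c₂ c₃ c₄ : ℝ) (hc : c₁ + 2*c₂ + 3*c₃ + 2*c₄ = 1)
    (lam : ℂ → ℂ)
    (hlam : lam = fun z => (c₁:ℂ) * (z + conj z) + (c₂:ℂ) * (z^2 + (conj z)^2)
      + (c₃:ℂ) * (z^3 + (conj z)^3) + (c₄:ℂ) * ((Complex.normSq z : ℂ))^2) :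
    ivExpr lam 0 = 0 ∧ ivExpr lam 1 = 0 ∧
    wdzbar (wdz lam) 0 = 0 ∧ (c₄ ≠ 0 → wdzbar (wdz lam) 1 ≠ 0) := by
  set Λ : MvPolynomial (Fin 2) ℂ := C (c₁:ℂ) * (X 0 + X 1) + C (c₂:ℂ) * (X 0 ^ 2 + X 1 ^ 2)
    + C (c₃:ℂ) * (X 0 ^ 3 + X 1 ^ 3) + C (c₄:ℂ) * (X 0 * X 1) ^ 2 with hΛ
  have hlam_eval : lam = evalZConj Λ := by
    subst hlam
    funext z
    simp [hΛ, ← mul_conj]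
  have hdz : pderiv 0 Λ = C (c₁:ℂ) + 2 * C (c₂:ℂ) * X 0 + 3 * C (c₃:ℂ) * X 0 ^ 2
      + 2 * C (c₄:ℂ) * X 0 * X 1 ^ 2 := by
    simp only [hΛ, map_add, Derivation.leibniz, Derivation.leibniz_pow, pderiv_X_self,
      pderiv_X_of_ne one_ne_zero, derivation_C, smul_eq_mul, nsmul_eq_mul]
    ring
  have hdzbar_dz : pderiv 1 (pderiv 0 Λ) = 4 * C (c₄:ℂ) * X 0 * X 1 := by
    simp only [hdz, map_add, Derivation.leibniz, Derivation.leibniz_pow, pderiv_X_self,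
      pderiv_X_of_ne zero_ne_one, derivation_C, Derivation.map_ofNat, smul_eq_mul, nsmul_eq_mul]
    ring
  have hdz_dzbar_dz : pderiv 0 (pderiv 1 (pderiv 0 Λ)) = 4 * C (c₄:ℂ) * X 1 := by
    simp only [hdzbar_dz, Derivation.leibniz, pderiv_X_self, pderiv_X_of_ne one_ne_zero, derivation_C,
      Derivation.map_ofNat, smul_eq_mul]
    ring
  have hc' : (c₁:ℂ) + 2*c₂ + 3*c₃ + 2*c₄ = 1 := by exact_mod_cast hc
  simp only [ivExpr, hlam_eval, wdz_evalZConj, wdzbar_evalZConj]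
  rw [hdz_dzbar_dz, hdzbar_dz, hdz]
  refine ⟨by simp, ?_, by simp, fun h4 => by simpa using h4⟩
  simp only [evalZConj_apply, map_add, map_mul, map_pow, eval_C, eval_X, eval_ofNat, map_one,
    Matrix.cons_val_zero, Matrix.cons_val_one, Matrix.cons_val_fin_one, one_pow, mul_one]
  linear_combination 4 * (c₄:ℂ) * hc'
end
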